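/- Let a maintenance instance on a graph be given, let t_1 < … < t_ℓ be the distinct values of d_e − p_e over e ∈ E, and set t_0 = 0 and t_{ℓ+1} = T. For i ∈ {1,…,ℓ+1} let S_i be the non-preemptive schedule that starts every edge e with d_e − p_e ≥ t_i at time d_e − p_e and every other edge at time r_e. Then S_i is feasible, and for every feasible non-preemptive schedule S, the Lebesgue measure of {t ∈ [t_{i−1}, t_i] : the network is connected at t under S} is at most the Lebesgue measure of {t ∈ [t_{i−1}, t_i] : the network is connected at t under S_i}. -/
import Mathlib


open MeasureTheory Set

/-- Feasibility of a non-preemptive schedule: each edge `e` starts its maintenance at time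
`σ e` with `r e ≤ σ e` and `σ e + p e ≤ d e`; it is maintained during `[σ e, σ e + p e]`. -/
def NonpreemptFeasible {V : Type*} (G : SimpleGraph V) (r d p : Sym2 V → ℝ)
    (σ : Sym2 V → ℝ) : Prop :=
  ∀ e ∈ G.edgeSet, r e ≤ σ e ∧ σ e + p e ≤ d e

/-- The network is connected at time `t` under the non-preemptive schedule `σ`:
`sp` and `sm` are joined by a path of edges not maintained at `t`. -/
def ConnAt {V : Type*} (G : SimpleGraph V) (sp sm : V) (p : Sym2 V → ℝ)
    (σ : Sym2 V → ℝ) (t : ℝ) : Prop :=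
  (G.deleteEdges {e | t ∈ Set.Icc (σ e) (σ e + p e)}).Reachable sp sm

/-- The schedule `Sᵢ` of the approximation algorithm (for a threshold time `θ`):
every edge `e` with latest start time `d e - p e ≥ θ` starts at `d e - p e`,
and every other edge starts at its release date `r e`. -/
noncomputable def greedySchedule {V : Type*} (_G : SimpleGraph V) (r d p : Sym2 V → ℝ)
    (θ : ℝ) : Sym2 V → ℝ :=
  fun e => if θ ≤ d e - p e then d e - p e else r e

/-- The threshold times `t₁, …, t_ℓ, t_{ℓ+1} = T`. -/
def threshPts {ℓ : ℕ} (m : Fin ℓ → ℝ) (T : ℝ) : Fin (ℓ + 1) → ℝ :=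
  Fin.snoc m T

/-- The full grid of time points `t₀ = 0, t₁, …, t_ℓ, t_{ℓ+1} = T`. -/
def gridPts {ℓ : ℕ} (m : Fin ℓ → ℝ) (T : ℝ) : Fin (ℓ + 2) → ℝ :=
  Fin.cons 0 (threshPts m T)


lemma aux_snoc_le {ℓ : ℕ} {m : Fin ℓ → ℝ} (hm : StrictMono m) (T : ℝ)
    (k : Fin ℓ) (x : Fin (ℓ + 1)) (hx : x.val ≤ k.val) : threshPts m T x ≤ m k := by
  have hxlt : x.val < ℓ := lt_of_le_of_lt hx k.isLt
  have h1 : threshPts m T x = m ⟨x.val, hxlt⟩ := by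
    simp [threshPts, Fin.snoc, hxlt]; rfl
  rw [h1]
  exact hm.monotone (Fin.le_def.mpr hx)

lemma aux_grid {ℓ : ℕ} {m : Fin ℓ → ℝ} (hm : StrictMono m) (T : ℝ)
    (i : Fin (ℓ + 1)) {τ : ℝ} (hτ : τ ∈ Set.range m)
    (hlt : τ < threshPts m T i) : τ ≤ gridPts m T i.castSucc := by
  obtain ⟨k, hk⟩ := hτ
  subst hk
  induction i using Fin.cases with
  | zero =>
      exact absurd hlt (not_lt.mpr (aux_snoc_le hm T k 0 (Nat.zero_le _)))
  | succ j =>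
      have hgrid : gridPts m T (Fin.succ j).castSucc = m j := by
        rw [← Fin.succ_castSucc]
        simp [gridPts, threshPts]
      rw [hgrid]
      by_contra hjk
      push_neg at hjk
      have hjk' : j < k := hm.lt_iff_lt.mp hjk
      have hle : threshPts m T (Fin.succ j) ≤ m k :=
        aux_snoc_le hm T k (Fin.succ j) (by simpa [Fin.val_succ] using hjk')
      exact absurd hlt (not_lt.mpr hle)

/-- **Interval optimality of the schedules `Sᵢ`.** Let `t₁ < ⋯ < t_ℓ` (`m 0 < ⋯ < m (ℓ-1)`)
be the distinct latest start times `d e - p e`, and set `t₀ = 0` and `t_{ℓ+1} = T`.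
For each `i ∈ {1, …, ℓ+1}`, the schedule `Sᵢ` starting every edge with `d e - p e ≥ tᵢ`
at `d e - p e` and every other edge at `r e` is feasible, and among all feasible
non-preemptive schedules it maximizes the measure of connected times within
`[t_{i-1}, t_i]`. -/
theorem greedy_interval_optimal {V : Type*} [Fintype V]
    (G : SimpleGraph V) (sp sm : V) (r d p : Sym2 V → ℝ)
    (hr : ∀ e ∈ G.edgeSet, 0 ≤ r e)
    (hp : ∀ e ∈ G.edgeSet, 0 ≤ p e)
    (hrd : ∀ e ∈ G.edgeSet, r e + p e ≤ d e)
    {ℓ : ℕ} (m : Fin ℓ → ℝ) (hm : StrictMono m)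
    (hmrange : Set.range m = {τ : ℝ | ∃ e ∈ G.edgeSet, d e - p e = τ})
    (T : ℝ) (hT : IsGreatest {τ : ℝ | ∃ e ∈ G.edgeSet, d e = τ} T)
    (i : Fin (ℓ + 1)) :
    NonpreemptFeasible G r d p (greedySchedule G r d p (threshPts m T i)) ∧
    ∀ σ : Sym2 V → ℝ, NonpreemptFeasible G r d p σ →
      volume {t ∈ Set.Icc (gridPts m T i.castSucc) (gridPts m T i.succ) |
          ConnAt G sp sm p σ t} ≤
      volume {t ∈ Set.Icc (gridPts m T i.castSucc) (gridPts m T i.succ) |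
          ConnAt G sp sm p (greedySchedule G r d p (threshPts m T i)) t} := by
  constructor
  · intro e he
    unfold greedySchedule
    split_ifs with h
    · refine ⟨by linarith [hrd e he], by linarith⟩
    · exact ⟨le_refl _, hrd e he⟩
  · intro σ hσ
    have hb : gridPts m T i.succ = threshPts m T i := by simp [gridPts]
    set a := gridPts m T i.castSucc with ha
    set b := threshPts m T i with hbb
    rw [hb]
    have hconn : ∀ t ∈ Set.Ioo a b,
        ConnAt G sp sm p σ t → ConnAt G sp sm p (greedySchedule G r d p b) t := by
      intro t ht hc
      refine SimpleGraph.Reachable.mono ?_ hc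
      intro x y hxy
      rw [SimpleGraph.deleteEdges_adj] at hxy ⊢
      refine ⟨hxy.1, fun hmem => hxy.2 ?_⟩
      have he : s(x, y) ∈ G.edgeSet := hxy.1
      simp only [Set.mem_setOf_eq, Set.mem_Icc, greedySchedule] at hmem ⊢
      split_ifs at hmem with hθ
      · exfalso
        have : b ≤ t := le_trans hθ hmem.1
        exact absurd this (not_le.mpr ht.2)
      · push_neg at hθ
        have hτ : d s(x, y) - p s(x, y) ∈ Set.range m := by
          rw [hmrange]; exact ⟨s(x, y), he, rfl⟩
        have hle := aux_grid hm T i hτ hθ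
        have h1 := (hσ _ he).1
        have h2 := (hσ _ he).2
        have ht1 := ht.1
        have ht2 := ht.2
        constructor
        · linarith
        · linarith [hmem.2]
    have hsub : {t ∈ Set.Icc a b | ConnAt G sp sm p σ t} ⊆
        {t ∈ Set.Icc a b | ConnAt G sp sm p (greedySchedule G r d p b) t} ∪ {a, b} := by
      rintro t ⟨htI, htc⟩
      rcases eq_or_lt_of_le htI.1 with h1 | h1
      · exact Or.inr (Or.inl h1.symm)
      rcases eq_or_lt_of_le htI.2 with h2 | h2
      · exact Or.inr (Or.inr h2)
      exact Or.inl ⟨htI, hconn t ⟨h1, h2⟩ htc⟩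
    calc volume {t ∈ Set.Icc a b | ConnAt G sp sm p σ t}
        ≤ volume ({t ∈ Set.Icc a b | ConnAt G sp sm p (greedySchedule G r d p b) t} ∪ {a, b}) :=
          measure_mono hsub
      _ ≤ volume {t ∈ Set.Icc a b | ConnAt G sp sm p (greedySchedule G r d p b) t}
            + volume ({a, b} : Set ℝ) := measure_union_le _ _
      _ = volume {t ∈ Set.Icc a b | ConnAt G sp sm p (greedySchedule G r d p b) t} := by
          rw [((Set.finite_singleton b).insert a).countable.measure_zero, add_zero]
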